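/- arXiv:1706.00076 — 3 statements merged into one kernel-verified Lean document; each statement's English description precedes it below -/
import Mathlib

section
/- For each choice of κ₁, κ₂ with 0 < κ₂ ≤ 1/2 < κ₁ < 1 and κ₁ + κ₂ > 1, and each dense subset D of rationals k/m in (0, 1/2), the set G = ⋂_{N≥1} ⋃_{k,m ≥ N, k/m ∈ D} ((pq − κ₁)/q², (rs + κ₂)/s²) (with p,q,r,s defined from k,m as n=4mk+1, q=n², s=n²+4m², p=4k²(2n+1), r=p+2n−3) is a dense Gδ subset of (0,1). -/
/-- `n = 4mk+1` -/
def wN (k m : ℕ) : ℕ := 4*m*k + 1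
/-- `q = n²` -/
def wQ (k m : ℕ) : ℕ := (wN k m)^2
/-- `s = n² + 4m²` -/
def wS (k m : ℕ) : ℕ := (wN k m)^2 + 4*m^2
/-- `p = 4k²(2n+1)` -/
def wP (k m : ℕ) : ℕ := 4*k^2*(2*(wN k m)+1)
/-- `r = p + 2n − 3` -/
def wR (k m : ℕ) : ℕ := wP k m + 2*(wN k m) - 3

/-- The open interval `((pq−κ₁)/q², (rs+κ₂)/s²)`. -/
def wI (κ₁ κ₂ : ℝ) (k m : ℕ) : Set ℝ :=
  Set.Ioo (((wP k m : ℝ)*(wQ k m) - κ₁)/(wQ k m : ℝ)^2)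
          (((wR k m : ℝ)*(wS k m) + κ₂)/(wS k m : ℝ)^2)

lemma core (κ₁ κ₂ : ℝ) (h1 : 0 < κ₂) (h2 : κ₂ ≤ 1/2) (h3 : 1/2 < κ₁)
    (h4 : κ₁ < 1) (h5 : 1 < κ₁ + κ₂) (a b : ℝ) (ha : 1 ≤ a) (hb : 2*a+1 ≤ b) :
    2*a/b - 1/b^2 < (4*a^2*(2*(4*b*a+1)+1) * ((4*b*a+1)^2) - κ₁)/((4*b*a+1)^2)^2 ∧
    (4*a^2*(2*(4*b*a+1)+1) * ((4*b*a+1)^2) - κ₁)/((4*b*a+1)^2)^2 <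
      ((4*a^2*(2*(4*b*a+1)+1)+2*(4*b*a+1)-3) * ((4*b*a+1)^2+4*b^2) + κ₂)/((4*b*a+1)^2+4*b^2)^2 ∧
    ((4*a^2*(2*(4*b*a+1)+1)+2*(4*b*a+1)-3) * ((4*b*a+1)^2+4*b^2) + κ₂)/((4*b*a+1)^2+4*b^2)^2 < 2*a/b := by
  have ha0 : 0 < a := by linarith
  have hb0 : 0 < b := by linarith
  have hab : 0 < a*b := mul_pos ha0 hb0
  set n : ℝ := 4*b*a+1 with hn
  have hn0 : (1:ℝ) < n := by nlinarith
  set Q : ℝ := (4*b*a+1)^2 with hQd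
  set S : ℝ := (4*b*a+1)^2+4*b^2 with hSd
  set P : ℝ := 4*a^2*(2*(4*b*a+1)+1) with hPd
  have hQ0 : 0 < Q := by positivity
  have hQ1 : 1 < Q := by nlinarith
  have hS0 : 0 < S := by positivity
  have hQS : Q < S := by nlinarith
  have hb2 : (0:ℝ) < b^2 := by positivity
  refine ⟨?_, ?_, ?_⟩
  · -- left bound
    have hL : 2*a/b - 1/b^2 = (2*a*b-1)/b^2 := by field_simp
    rw [hL, div_lt_div_iff₀ hb2 (by positivity)]
    have e1 : (P*Q - κ₁)*b^2 - (2*a*b-1)*Q^2 = Q*(12*a^2*b^2+6*a*b+1) - κ₁*b^2 := by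
      rw [hPd, hQd]; ring
    have hA : κ₁*b^2 < Q*(12*a^2*b^2+6*a*b+1) := by
      have hX : 12*b^2 ≤ 12*a^2*b^2+6*a*b+1 := by nlinarith [mul_le_mul_of_nonneg_right (one_le_sq_iff_one_le_abs a |>.mpr (by rwa [abs_of_pos ha0]) : 1 ≤ a^2) hb2.le]
      have h2' : (0:ℝ) ≤ Q - 1 := by linarith
      nlinarith [mul_nonneg h2' (by linarith : (0:ℝ) ≤ 12*a^2*b^2+6*a*b+1)]
    linarith
  · rw [div_lt_div_iff₀ (by positivity) (by positivity)]
    have e4 : ((P+2*n-3)*S+κ₂)*Q^2 - (P*Q - κ₁)*S^2 = κ₁*S^2+κ₂*Q^2 - Q*S := by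
      rw [hPd, hQd, hSd, hn]; ring
    have t1 : 0 < (κ₁+κ₂-1)*Q^2 := mul_pos (by linarith) (by positivity)
    have t2 : 0 ≤ (2*κ₁-1)*(4*Q*b^2) := mul_nonneg (by linarith) (by positivity)
    have t3 : 0 < 16*κ₁*b^4 := by positivity
    have e5 : κ₁*S^2+κ₂*Q^2 - Q*S = (κ₁+κ₂-1)*Q^2 + (2*κ₁-1)*(4*Q*b^2) + 16*κ₁*b^4 := by
      rw [hQd, hSd]; ring
    linarith
  · have step1 : ((P+2*n-3)*S+κ₂)/S^2 < P/Q := by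
      rw [div_lt_div_iff₀ (by positivity) hQ0]
      have e3 : P*S^2 - ((P+2*n-3)*S+κ₂)*Q = S - κ₂*Q := by rw [hPd, hQd, hSd, hn]; ring
      have : κ₂*Q ≤ (1/2)*Q := mul_le_mul_of_nonneg_right h2 hQ0.le
      linarith
    have step2 : P/Q < 2*a/b := by
      rw [div_lt_div_iff₀ hQ0 hb0]
      have e2 : 2*a*Q - P*b = 4*b*a^2+2*a := by rw [hPd, hQd]; ring
      nlinarith
    exact lt_trans step1 step2

lemma wI_eq (κ₁ κ₂ : ℝ) (k m : ℕ) (hk : 1 ≤ k) :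
    wI κ₁ κ₂ k m =
    Set.Ioo ((4*(k:ℝ)^2*(2*(4*(m:ℝ)*k+1)+1) * ((4*(m:ℝ)*k+1)^2) - κ₁)/((4*(m:ℝ)*k+1)^2)^2)
      (((4*(k:ℝ)^2*(2*(4*(m:ℝ)*k+1)+1)+2*(4*(m:ℝ)*k+1)-3) * ((4*(m:ℝ)*k+1)^2+4*(m:ℝ)^2) + κ₂)
        /((4*(m:ℝ)*k+1)^2+4*(m:ℝ)^2)^2) := by
  have h3 : 3 ≤ wP k m + 2 * wN k m := by
    have : 4 ≤ wP k m := by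
      unfold wP wN
      calc 4 ≤ 4*1*1 := by norm_num
        _ ≤ 4*k^2*(2*(4*m*k+1)+1) := by
          apply Nat.mul_le_mul (Nat.mul_le_mul_left 4 (Nat.one_le_pow _ _ hk)) (by omega)
    omega
  have eR : (wR k m : ℝ) = 4*(k:ℝ)^2*(2*(4*(m:ℝ)*k+1)+1)+2*(4*(m:ℝ)*k+1)-3 := by
    unfold wR
    rw [Nat.cast_sub h3]
    push_cast [wP, wN]; ring
  unfold wI
  rw [eR]
  push_cast [wP, wQ, wS, wN]
  norm_num

lemma wI_props (κ₁ κ₂ : ℝ) (h1 : 0 < κ₂) (h2 : κ₂ ≤ 1/2) (h3 : 1/2 < κ₁)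
    (h4 : κ₁ < 1) (h5 : 1 < κ₁ + κ₂) (k m : ℕ) (hk : 1 ≤ k) (hm : 2*k < m) :
    (wI κ₁ κ₂ k m).Nonempty ∧
      wI κ₁ κ₂ k m ⊆ Set.Ioo (2*(k:ℝ)/m - 1/(m:ℝ)^2) (2*(k:ℝ)/m) := by
  have ha : (1:ℝ) ≤ (k:ℝ) := by exact_mod_cast hk
  have hb : 2*(k:ℝ)+1 ≤ (m:ℝ) := by exact_mod_cast Nat.succ_le_of_lt hm
  obtain ⟨g1, g2, g3⟩ := core κ₁ κ₂ h1 h2 h3 h4 h5 (k:ℝ) (m:ℝ) ha hb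
  rw [wI_eq κ₁ κ₂ k m hk]
  exact ⟨Set.nonempty_Ioo.mpr g2, Set.Ioo_subset_Ioo g1.le g3.le⟩

set_option maxHeartbeats 1000000 in
lemma hitU (κ₁ κ₂ : ℝ) (h1 : 0 < κ₂) (h2 : κ₂ ≤ 1/2) (h3 : 1/2 < κ₁)
    (h4 : κ₁ < 1) (h5 : 1 < κ₁ + κ₂)
    (D : Set (ℕ × ℕ))
    (hDpos : ∀ km ∈ D, 0 < km.1 ∧ 0 < km.2 ∧ (km.1 : ℝ)/km.2 ∈ Set.Ioo (0:ℝ) (1/2))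
    (hDdense : ∀ x ∈ Set.Ioo (0:ℝ) (1/2),
        x ∈ closure {y : ℝ | ∃ km ∈ D, y = (km.1 : ℝ)/km.2})
    (N : ℕ) (x : ℝ) (hx : x ∈ Set.Ioo (0:ℝ) 1) (ε : ℝ) (hε : 0 < ε) :
    ∃ w ∈ ⋃ km ∈ D, ⋃ (_ : N ≤ km.1 ∧ N ≤ km.2), wI κ₁ κ₂ km.1 km.2, |w - x| < ε := by
  obtain ⟨hx0, hx1⟩ := hx
  set t := x/2 with ht
  have ht0 : 0 < t := by rw [ht]; linarith
  have ht12 : t < 1/2 := by rw [ht]; linarith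
  set δ := min (ε/8) (min (t/4) ((1/2 - t)/2)) with hδ
  have hδ0 : 0 < δ := lt_min (by linarith) (lt_min (by linarith) (by linarith))
  have hδε : δ ≤ ε/8 := min_le_left _ _
  have hδt : δ ≤ t/4 := (min_le_right _ _).trans (min_le_left _ _)
  have hδh : δ ≤ (1/2 - t)/2 := (min_le_right _ _).trans (min_le_right _ _)
  obtain ⟨M, hM⟩ := exists_nat_gt (max (max (N:ℝ) (4*(N:ℝ)/t)) (2/ε))
  have hMN : (N:ℝ) < M := lt_of_le_of_lt ((le_max_left _ _).trans (le_max_left _ _)) hM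
  have hMNt : 4*(N:ℝ)/t < M := lt_of_le_of_lt ((le_max_right _ _).trans (le_max_left _ _)) hM
  have hMε : 2/ε < M := lt_of_le_of_lt (le_max_right _ _) hM
  set S : Set ℝ := (fun km : ℕ×ℕ => ((km.1:ℝ)/km.2)) '' {km ∈ D | km.2 ≤ M} with hS
  have hSfin : S.Finite := by
    apply Set.Finite.image
    apply Set.Finite.subset ((Set.finite_Iic M).prod (Set.finite_Iic M))
    rintro ⟨k, m⟩ ⟨hkmD, hm2⟩
    obtain ⟨hk0, hm0, hv0, hv12⟩ := hDpos _ hkmD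
    have hm0' : (0:ℝ) < m := by exact_mod_cast hm0
    have : (k:ℝ) < m := by
      rw [div_lt_iff₀ hm0'] at hv12; nlinarith
    have hkm : k < m := by exact_mod_cast this
    exact ⟨le_of_lt (lt_of_lt_of_le hkm hm2), hm2⟩
  obtain ⟨z, hzirr, hz1, hz2⟩ := exists_irrational_btwn (show t - δ < t + δ by linarith)
  have hznotS : z ∉ S := by
    rintro ⟨km, ⟨hkmD, -⟩, rfl⟩
    exact hzirr ⟨(km.1:ℚ)/(km.2:ℚ), by push_cast; ring⟩
  obtain ⟨ρ, hρ0, hρ⟩ := Metric.isOpen_iff.mp hSfin.isClosed.isOpen_compl z hznotS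
  have hzcl := hDdense z ⟨by linarith, by linarith⟩
  rw [Metric.mem_closure_iff] at hzcl
  obtain ⟨y, hyV, hzy⟩ := hzcl (min ρ δ) (lt_min hρ0 hδ0)
  obtain ⟨km, hkmD, rfl⟩ := hyV
  obtain ⟨hk0, hm0, hv0, hv12⟩ := hDpos _ hkmD
  have hm0' : (0:ℝ) < km.2 := by exact_mod_cast hm0
  have hdz : |z - (km.1:ℝ)/km.2| < min ρ δ := by rwa [Real.dist_eq] at hzy
  have habs := abs_lt.mp hdz
  have hmd : min ρ δ ≤ δ := min_le_right _ _
  have hmM : M < km.2 := by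
    by_contra hcon
    push_neg at hcon
    have hmem : (km.1:ℝ)/km.2 ∈ Metric.ball z ρ := by
      rw [Metric.mem_ball, Real.dist_eq, abs_sub_comm]
      exact lt_of_lt_of_le hdz (min_le_left _ _)
    exact hρ hmem ⟨km, ⟨hkmD, hcon⟩, rfl⟩
  have hmM' : (M:ℝ) < km.2 := by exact_mod_cast hmM
  clear hρ hznotS hSfin hzcl hzirr hS hmM
  clear S
  -- bounds on y = k/m
  have hyt1 : (km.1:ℝ)/km.2 > t - 2*δ := by
    have h1' := habs.2; linarith
  have hyt2 : (km.1:ℝ)/km.2 < t + 2*δ := by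
    have h1' := habs.1; linarith
  -- k ≥ N
  have hkbig : (N:ℝ) < km.1 := by
    have hy2 : t/2 < (km.1:ℝ)/km.2 := by linarith
    rw [lt_div_iff₀ hm0'] at hy2
    have hm4N : 4*(N:ℝ)/t < (km.2:ℝ) := by linarith
    rw [div_lt_iff₀ ht0] at hm4N
    nlinarith
  have hNk : N ≤ km.1 := by exact_mod_cast hkbig.le
  have hNm : N ≤ km.2 := by
    have : (N:ℝ) < km.2 := by linarith
    exact_mod_cast this.le
  -- 1/m^2 < ε/2
  have hm1 : (1:ℝ) ≤ km.2 := by exact_mod_cast hm0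
  have hminv : 1/(km.2:ℝ)^2 < ε/2 := by
    have h2e : 2/ε < (km.2:ℝ) := by linarith
    rw [div_lt_iff₀ hε] at h2e
    have hsq : (km.2:ℝ) ≤ (km.2:ℝ)^2 := le_self_pow₀ hm1 (by norm_num)
    have hm2 : (0:ℝ) < (km.2:ℝ)^2 := by positivity
    rw [div_lt_iff₀ hm2]
    have := mul_le_mul_of_nonneg_left hsq hε.le
    linarith
  -- 2k < m
  have h2km : 2*km.1 < km.2 := by
    have := hv12
    rw [div_lt_iff₀ hm0'] at this
    have : (2*km.1:ℝ) < km.2 := by push_cast; linarith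
    exact_mod_cast this
  obtain ⟨⟨w, hw⟩, hsub⟩ := wI_props κ₁ κ₂ h1 h2 h3 h4 h5 km.1 km.2 hk0 h2km
  obtain ⟨hwl, hwr⟩ := hsub hw
  have he : 2*(km.1:ℝ)/km.2 = 2*((km.1:ℝ)/km.2) := by ring
  rw [he] at hwl hwr
  refine ⟨w, ?_, ?_⟩
  · simp only [Set.mem_iUnion, exists_prop]
    exact ⟨km, hkmD, ⟨hNk, hNm⟩, hw⟩
  · have hδ4 : 2*δ ≤ ε/4 := by linarith
    rw [abs_lt]
    constructor
    · have h' : 2*((km.1:ℝ)/km.2) > 2*(t - 2*δ) := by linarith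
      have ht' : t = x/2 := ht
      linarith
    · have h' : 2*((km.1:ℝ)/km.2) < 2*(t + 2*δ) := by linarith
      have ht' : t = x/2 := ht
      linarith

theorem stmt15 (κ₁ κ₂ : ℝ) (h1 : 0 < κ₂) (h2 : κ₂ ≤ 1/2) (h3 : 1/2 < κ₁)
    (h4 : κ₁ < 1) (h5 : 1 < κ₁ + κ₂)
    (D : Set (ℕ × ℕ))
    (hDpos : ∀ km ∈ D, 0 < km.1 ∧ 0 < km.2 ∧ (km.1 : ℝ)/km.2 ∈ Set.Ioo (0:ℝ) (1/2))
    (hDdense : ∀ x ∈ Set.Ioo (0:ℝ) (1/2),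
        x ∈ closure {y : ℝ | ∃ km ∈ D, y = (km.1 : ℝ)/km.2}) :
    IsGδ (⋂ N : ℕ, ⋃ km ∈ D, ⋃ (_ : N ≤ km.1 ∧ N ≤ km.2), wI κ₁ κ₂ km.1 km.2)
    ∧ (⋂ N : ℕ, ⋃ km ∈ D, ⋃ (_ : N ≤ km.1 ∧ N ≤ km.2), wI κ₁ κ₂ km.1 km.2)
        ⊆ Set.Ioo (0:ℝ) 1
    ∧ ∀ x ∈ Set.Ioo (0:ℝ) 1,
        x ∈ closure (⋂ N : ℕ, ⋃ km ∈ D, ⋃ (_ : N ≤ km.1 ∧ N ≤ km.2),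
          wI κ₁ κ₂ km.1 km.2) := by
  set U : ℕ → Set ℝ :=
    fun N => ⋃ km ∈ D, ⋃ (_ : N ≤ km.1 ∧ N ≤ km.2), wI κ₁ κ₂ km.1 km.2 with hU
  have hUopen : ∀ N, IsOpen (U N) := fun N =>
    isOpen_biUnion fun km _ => isOpen_iUnion fun _ => isOpen_Ioo
  refine ⟨IsGδ.iInter fun N => (hUopen N).isGδ, ?_, ?_⟩
  · intro x hx
    have hx1 := Set.mem_iInter.mp hx 1
    simp only [Set.mem_iUnion, exists_prop] at hx1
    obtain ⟨km, hkmD, ⟨hk1, hm1⟩, hxI⟩ := hx1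
    obtain ⟨hk0, hm0, hv0, hv12⟩ := hDpos km hkmD
    have hm0' : (0:ℝ) < km.2 := by exact_mod_cast hm0
    have hk1' : (1:ℝ) ≤ km.1 := by exact_mod_cast hk0
    have h2km : 2*km.1 < km.2 := by
      have h' := hv12
      rw [div_lt_iff₀ hm0'] at h'
      have h'' : (2*km.1:ℝ) < km.2 := by push_cast; linarith
      exact_mod_cast h''
    have h2km' : (2*km.1:ℝ) < km.2 := by exact_mod_cast h2km
    obtain ⟨-, hsub⟩ := wI_props κ₁ κ₂ h1 h2 h3 h4 h5 km.1 km.2 hk0 h2km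
    obtain ⟨hl, hr⟩ := hsub hxI
    constructor
    · have e : 2*(km.1:ℝ)/km.2 - 1/(km.2:ℝ)^2 = (2*km.1*km.2 - 1)/(km.2:ℝ)^2 := by
        field_simp
      have hnum : (0:ℝ) < 2*(km.1:ℝ)*km.2 - 1 := by nlinarith
      have : (0:ℝ) < 2*(km.1:ℝ)/km.2 - 1/(km.2:ℝ)^2 := by
        rw [e]; positivity
      linarith
    · have hlt1 : 2*(km.1:ℝ)/km.2 < 1 := by
        rw [div_lt_one hm0']; push_cast; linarith
      linarith
  · intro x hx
    set V : ℕ → Set ℝ := fun N => U N ∪ (Set.Iio 0 ∪ Set.Ioi 1) with hV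
    have hVopen : ∀ N, IsOpen (V N) :=
      fun N => (hUopen N).union (isOpen_Iio.union isOpen_Ioi)
    have hVdense : ∀ N, Dense (V N) := by
      intro N
      rw [Metric.dense_iff]
      intro c r hr
      rcases le_or_gt c 0 with hc | hc
      · refine ⟨c - r/2, ?_, Or.inr (Or.inl ?_)⟩
        · rw [Metric.mem_ball, Real.dist_eq]
          rw [abs_lt]; constructor <;> linarith
        · simp only [Set.mem_Iio]; linarith
      · rcases le_or_gt 1 c with hc1 | hc1
        · refine ⟨c + r/2, ?_, Or.inr (Or.inr ?_)⟩
          · rw [Metric.mem_ball, Real.dist_eq]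
            rw [abs_lt]; constructor <;> linarith
          · simp only [Set.mem_Ioi]; linarith
        · obtain ⟨w, hwU, hwc⟩ := hitU κ₁ κ₂ h1 h2 h3 h4 h5 D hDpos hDdense N c
            ⟨hc, hc1⟩ r hr
          refine ⟨w, ?_, Or.inl hwU⟩
          rw [Metric.mem_ball, Real.dist_eq]
          exact hwc
    have hGdense : Dense (⋂ N, V N) := dense_iInter_of_isOpen hVopen hVdense
    rw [Metric.mem_closure_iff]
    intro ε hε
    have hε'0 : 0 < min ε (min x (1 - x)) :=
      lt_min hε (lt_min hx.1 (by linarith [hx.2]))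
    obtain ⟨y, hyb, hyV⟩ := Metric.dense_iff.mp hGdense x _ hε'0
    rw [Metric.mem_ball, Real.dist_eq] at hyb
    have habs := abs_lt.mp hyb
    have hm1 : min ε (min x (1 - x)) ≤ x := (min_le_right _ _).trans (min_le_left _ _)
    have hm2 : min ε (min x (1 - x)) ≤ 1 - x := (min_le_right _ _).trans (min_le_right _ _)
    have hm3 : min ε (min x (1 - x)) ≤ ε := min_le_left _ _
    have hy0 : 0 < y := by linarith [habs.1]
    have hy1 : y < 1 := by linarith [habs.2]
    refine ⟨y, ?_, ?_⟩
    · rw [Set.mem_iInter]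
      intro N
      have hN := Set.mem_iInter.mp hyV N
      rcases hN with h | h
      · exact h
      · rcases h with h | h
        · exact absurd (Set.mem_Iio.mp h) (by linarith)
        · exact absurd (Set.mem_Ioi.mp h) (by linarith)
    · rw [Real.dist_eq, abs_sub_comm]
      linarith
end

section
/- The set of rationals {p/q : k, m ≥ 1}, where n = 4mk+1, q = n², p = 4k²(2n+1), is dense in the open interval (0,1), given that k/m ranges over a dense set of rationals in (0,1/2); indeed p/q − 2k/m → 0 as k, m → ∞. -/
lemma wEq (k m : ℕ) (hk : 1 ≤ k) (hm : 1 ≤ m) :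
    (wP k m : ℝ)/(wQ k m) - 2*(k:ℝ)/m
      = -((4*(k:ℝ)^2*m + 2*k)/((m:ℝ)*(wQ k m))) := by
  have hk' : (1:ℝ) ≤ k := by exact_mod_cast hk
  have hm' : (1:ℝ) ≤ m := by exact_mod_cast hm
  have hq : (wQ k m : ℝ) = (4*m*k+1)^2 := by
    push_cast [wQ, wN]; ring
  have hp : (wP k m : ℝ) = 4*k^2*(2*(4*m*k+1)+1) := by
    push_cast [wP, wN]; ring
  have hqpos : (0:ℝ) < (4*(m:ℝ)*k+1)^2 := by positivity
  rw [hq, hp]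
  field_simp
  ring

lemma wErr (k m : ℕ) (hk : 1 ≤ k) (hm : 1 ≤ m) :
    |(wP k m : ℝ)/(wQ k m) - 2*(k:ℝ)/m| ≤ 1/m := by
  have hk' : (1:ℝ) ≤ k := by exact_mod_cast hk
  have hm' : (1:ℝ) ≤ m := by exact_mod_cast hm
  have hq : (wQ k m : ℝ) = (4*m*k+1)^2 := by
    push_cast [wQ, wN]; ring
  have hqpos : (0:ℝ) < wQ k m := by rw [hq]; positivity
  have hmpos : (0:ℝ) < m := by linarith
  rw [wEq k m hk hm, abs_neg, abs_of_nonneg (by positivity)]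
  rw [div_le_div_iff₀ (by positivity) hmpos]
  rw [hq]
  nlinarith [sq_nonneg ((m:ℝ)*k), mul_pos hmpos (lt_of_lt_of_le one_pos hk')]


theorem stmt16
    (D : Set (ℕ × ℕ))
    (hDpos : ∀ km ∈ D, 0 < km.1 ∧ 0 < km.2 ∧ (km.1 : ℝ)/km.2 ∈ Set.Ioo (0:ℝ) (1/2))
    (hDdense : ∀ x ∈ Set.Ioo (0:ℝ) (1/2),
        x ∈ closure {y : ℝ | ∃ km ∈ D, y = (km.1 : ℝ)/km.2}) :
    (∀ k m : ℕ, 1 ≤ k → 1 ≤ m →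
        (wP k m : ℝ)/(wQ k m) - 2*(k:ℝ)/m
          = -((4*(k:ℝ)^2*m + 2*k)/((m:ℝ)*(wQ k m)))) ∧
    ∀ x ∈ Set.Ioo (0:ℝ) 1,
      x ∈ closure {y : ℝ | ∃ km ∈ D, y = (wP km.1 km.2 : ℝ)/(wQ km.1 km.2)} := by
  refine ⟨wEq, ?_⟩
  intro x hx
  rw [Metric.mem_closure_iff]
  intro ε hε
  -- choose M with M > 2/ε
  obtain ⟨M, hM⟩ := exists_nat_gt (2/ε)
  -- half point
  have hx2 : x/2 ∈ Set.Ioo (0:ℝ) (1/2) := ⟨by linarith [hx.1], by linarith [hx.2]⟩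
  -- finite set of ratios with small denominators
  set F : Finset ℝ :=
    (Finset.range (M+1) ×ˢ Finset.range (M+1)).image (fun p => (p.1:ℝ)/p.2) with hF
  -- pick x' close to x/2, in (0,1/2), not in F
  have hδ : (0:ℝ) < min (ε/8) (x/2) := lt_min (by linarith) hx2.1
  have hIinf : (Set.Ioo (x/2 - min (ε/8) (x/2)) (x/2)).Infinite :=
    Set.Ioo_infinite (by linarith)
  obtain ⟨x', hx'I, hx'F⟩ := (hIinf.diff F.finite_toSet).nonempty
  have hx'1 : |x' - x/2| < ε/8 := by
    rw [abs_sub_lt_iff]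
    constructor
    · linarith [hx'I.2]
    · have := hx'I.1
      have h1 : min (ε/8) (x/2) ≤ ε/8 := min_le_left _ _
      linarith
  have hx'mem : x' ∈ Set.Ioo (0:ℝ) (1/2) := by
    constructor
    · have := hx'I.1
      have : x/2 - min (ε/8) (x/2) ≥ 0 := by
        have := min_le_right (ε/8) (x/2); linarith
      linarith [hx'I.1]
    · linarith [hx'I.2, hx2.2]
  -- open ball around x' avoiding F
  have hFc : IsOpen ((↑F : Set ℝ)ᶜ) := (F.finite_toSet.isClosed).isOpen_compl
  obtain ⟨r, hr, hball⟩ := Metric.isOpen_iff.mp hFc x' hx'F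
  -- get a point of D near x'
  have hcl := hDdense x' hx'mem
  rw [Metric.mem_closure_iff] at hcl
  obtain ⟨y, hy, hdy⟩ := hcl (min r (ε/8)) (lt_min hr (by linarith))
  obtain ⟨km, hkmD, rfl⟩ := hy
  obtain ⟨hk, hm, hratio⟩ := hDpos km hkmD
  set k := km.1; set m := km.2
  have hmR : (0:ℝ) < m := by exact_mod_cast hm
  -- ratio not in F, so m > M
  have hnotF : ((k:ℝ)/m) ∉ (↑F : Set ℝ) := by
    apply hball
    rw [Metric.mem_ball, Real.dist_eq, abs_sub_comm, ← Real.dist_eq]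
    exact lt_of_lt_of_le hdy (min_le_left _ _)
  have hmM : M < m := by
    by_contra hle
    push_neg at hle
    apply hnotF
    have hkm' : k < m := by
      have h2 : (k:ℝ)/m < 1 := lt_trans hratio.2 (by norm_num)
      have : (k:ℝ) < m := by
        rwa [div_lt_one hmR] at h2
      exact_mod_cast this
    simp only [hF, Finset.coe_image, Set.mem_image, Finset.mem_coe, Finset.mem_product]
    exact ⟨(k, m), by simp [Finset.mem_range]; omega, rfl⟩
  -- error bound
  have herr := wErr k m hk hm
  have h1m : (1:ℝ)/m < ε/2 := by
    have hmgt : (2/ε : ℝ) < m := by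
      have : (M:ℝ) < m := by exact_mod_cast hmM
      linarith
    have h2 : 2 < (m:ℝ) * ε := (div_lt_iff₀ hε).mp hmgt
    rw [div_lt_div_iff₀ hmR two_pos]
    nlinarith
  -- distance from x/2 to k/m
  have hd2 : |x/2 - (k:ℝ)/m| < ε/4 := by
    have := Real.dist_eq x' ((k:ℝ)/m) ▸ hdy
    have hdy' : |x' - (k:ℝ)/m| < ε/8 :=
      lt_of_lt_of_le (by rwa [Real.dist_eq] at hdy) (min_le_right _ _)
    calc |x/2 - (k:ℝ)/m| ≤ |x/2 - x'| + |x' - (k:ℝ)/m| := abs_sub_le _ _ _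
      _ < ε/8 + ε/8 := by
          rw [abs_sub_comm] at hx'1
          exact add_lt_add hx'1 hdy'
      _ = ε/4 := by ring
  refine ⟨(wP k m : ℝ)/(wQ k m), ⟨km, hkmD, rfl⟩, ?_⟩
  rw [Real.dist_eq]
  calc |x - (wP k m : ℝ)/(wQ k m)|
      ≤ |x - 2*((k:ℝ)/m)| + |2*((k:ℝ)/m) - (wP k m : ℝ)/(wQ k m)| := abs_sub_le _ _ _
    _ < ε/2 + ε/2 := by
        apply add_lt_add_of_lt_of_le
        · have : x - 2*((k:ℝ)/m) = 2*(x/2 - (k:ℝ)/m) := by ring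
          rw [this, abs_mul, abs_two]
          linarith
        · rw [abs_sub_comm]
          have h2 : 2*((k:ℝ)/m) = 2*(k:ℝ)/m := by ring
          rw [h2]
          exact le_trans herr (le_of_lt h1m)
    _ = ε := by ring
end

section
/- Let θ be irrational with 0 < 2km − m²θ < 1/2 for positive coprime integers 2k, m (so θ < 2k/m). If the inequalities (4mA − 2k)/(4mB − m) < r/s < θ hold (with A, B, r, s as in the construction), then t := m(A − Bθ) satisfies 0 < t < 1. -/
/-!
The construction satisfies the polynomial identity `2As² - 2Brs - B = 4m²`, so `B(rs + 1/2) < As²`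
and the upper bound `θ < (rs + 1/2)/s²` gives `Bθ < A`. The middle inequality is
`(4mA - 2k)/(4mB - m) < r/s < θ` with the positive denominator `m(4B - 1)` cleared, and the last one
follows from `m(2k - mθ) < 1/2` because `m ≥ 1`.
-/

section LinearOrderedField

variable {𝕜 : Type*} [Field 𝕜] [LinearOrder 𝕜] [IsStrictOrderedRing 𝕜]

lemma mul_lt_of_lt_add_half_div_sq {A B r s θ : 𝕜} (hB : 0 < B) (hs : s ≠ 0)
    (hkey : B * (2 * r * s + 1) ≤ 2 * A * s ^ 2) (hθ : θ < (r * s + 1 / 2) / s ^ 2) :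
    B * θ < A := by
  have hs2 : 0 < s ^ 2 := by positivity
  have hθs : θ * s ^ 2 < r * s + 1 / 2 := (lt_div_iff₀ hs2).1 hθ
  have : B * θ * s ^ 2 < A * s ^ 2 := by nlinarith [mul_lt_mul_of_pos_left hθs hB]
  exact lt_of_mul_lt_mul_right this hs2.le

lemma lt_of_one_le_of_mul_lt {a x c : 𝕜} (ha : 1 ≤ a) (hc : 0 ≤ c) (h : a * x < c) : x < c :=
  lt_of_not_ge fun hx => (le_mul_of_one_le_left (hc.trans hx) ha).not_gt (h.trans_le hx)

end LinearOrderedField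

theorem stmt17_general (k m n s r A B : ℤ) (hm : 1 ≤ m)
    (hn : n = 4*m*k + 1) (hs : s = n^2 + 4*m^2)
    (hr : r = 4*k^2*(2*n+1) + 2*n - 3)
    (hA : A = 64*k^3*m + 8*k*m + 24*k^2 - 1)
    (hB : B = 2*(16*k^2*m^2 + 8*k*m + 2*m^2 + 1))
    (θ : ℝ)
    (hhalf : 2*(k:ℝ)*m - (m:ℝ)^2*θ < 1/2)
    (h1 : (4*(m:ℝ)*A - 2*k)/(4*(m:ℝ)*B - m) < (r:ℝ)/s)
    (h2 : (r:ℝ)/s < θ)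
    (h3 : θ < ((r:ℝ)*s + 1/2)/(s:ℝ)^2) :
    0 < (m:ℝ)*((A:ℝ) - (B:ℝ)*θ)
    ∧ (m:ℝ)*((A:ℝ) - (B:ℝ)*θ) < (1/4)*(2*(k:ℝ) - (m:ℝ)*θ)
    ∧ (1/4)*(2*(k:ℝ) - (m:ℝ)*θ) < 1 := by
  have hkey : 2*A*s^2 - 2*B*r*s - B = 4*m^2 := by subst hn hs hr hA hB; ring
  have hs0 : s ≠ 0 := by rw [hs]; nlinarith [sq_nonneg n]
  have hB0 : 0 < B := by rw [hB]; nlinarith [sq_nonneg (4*k*m + 1)]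
  have hD : 0 < 4*m*B - m := by nlinarith
  have hm0 : (0:ℝ) < m := by exact_mod_cast (show 0 < m by omega)
  have hBθ : (B:ℝ) * θ < A :=
    mul_lt_of_lt_add_half_div_sq (by exact_mod_cast hB0) (by exact_mod_cast hs0)
      (by exact_mod_cast (show B * (2*r*s + 1) ≤ 2*A*s^2 by nlinarith)) h3
  have hcleared : 4*(m:ℝ)*A - 2*k < θ * (4*m*B - m) :=
    (div_lt_iff₀ (by exact_mod_cast hD)).1 (h1.trans h2)
  have hsmall : 2*(k:ℝ) - m*θ < 1/2 :=
    lt_of_one_le_of_mul_lt (a := (m:ℝ)) (by exact_mod_cast hm) (by norm_num)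
      (by linear_combination hhalf)
  exact ⟨mul_pos hm0 (by linarith), by linarith, by linarith⟩

theorem stmt17 (k m n s r A B : ℤ) (hk : 1 ≤ k) (hm : 1 ≤ m)
    (hn : n = 4*m*k + 1) (hs : s = n^2 + 4*m^2)
    (hr : r = 4*k^2*(2*n+1) + 2*n - 3)
    (hA : A = 64*k^3*m + 8*k*m + 24*k^2 - 1)
    (hB : B = 2*(16*k^2*m^2 + 8*k*m + 2*m^2 + 1))
    (θ : ℝ) (hθ : Irrational θ)
    (hcop : IsCoprime (2*k) m)
    (hpos : 0 < 2*(k:ℝ)*m - (m:ℝ)^2*θ)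
    (hhalf : 2*(k:ℝ)*m - (m:ℝ)^2*θ < 1/2)
    (h1 : (4*(m:ℝ)*A - 2*k)/(4*(m:ℝ)*B - m) < (r:ℝ)/s)
    (h2 : (r:ℝ)/s < θ)
    (h3 : θ < ((r:ℝ)*s + 1/2)/(s:ℝ)^2) :
    0 < (m:ℝ)*((A:ℝ) - (B:ℝ)*θ)
    ∧ (m:ℝ)*((A:ℝ) - (B:ℝ)*θ) < (1/4)*(2*(k:ℝ) - (m:ℝ)*θ)
    ∧ (1/4)*(2*(k:ℝ) - (m:ℝ)*θ) < 1 :=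
  stmt17_general k m n s r A B hm hn hs hr hA hB θ hhalf h1 h2 h3
end
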